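/- In a block graph G, every maximal co-interval subgraph of G is a big ant Q_{u,v} for some block Q of G and vertices u, v ∈ V(Q). -/

import Mathlib

/-- A vertex set `B` induces a 2-connected subgraph of `G` (where a single vertex or a
single edge counts as 2-connected): the induced graph is connected, and removing any
single vertex leaves it connected. -/
def IsTwoConnectedSet {V : Type*} (G : SimpleGraph V) (B : Set V) : Prop :=
  B.Nonempty ∧ (G.induce B).Connected ∧
    ∀ v ∈ B, (B \ {v}).Nonempty → (G.induce (B \ {v})).Connected

/-- A block of `G`: a maximal 2-connected vertex set. -/
def IsBlock {V : Type*} (G : SimpleGraph V) (B : Set V) : Prop :=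
  IsTwoConnectedSet G B ∧ ∀ B' : Set V, IsTwoConnectedSet G B' → B ⊆ B' → B = B'

/-- `v` is a cut-vertex of `G`: removing `v` disconnects two vertices that were
reachable from each other, i.e. it increases the number of connected components. -/
def IsCutVertex {V : Type*} (G : SimpleGraph V) (v : V) : Prop :=
  ∃ (a b : V) (ha : a ≠ v) (hb : b ≠ v), G.Reachable a b ∧
    ¬ (G.induce {x : V | x ≠ v}).Reachable ⟨a, ha⟩ ⟨b, hb⟩

/-- A leaf block: a block containing exactly one cut-vertex of `G`. -/
def IsLeafBlock {V : Type*} (G : SimpleGraph V) (B : Set V) : Prop :=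
  IsBlock G B ∧ ∃! v : V, v ∈ B ∧ IsCutVertex G v

/-- An internal block: a block containing at least two cut-vertices of `G`. -/
def IsInternalBlock {V : Type*} (G : SimpleGraph V) (B : Set V) : Prop :=
  IsBlock G B ∧ ∃ u v : V, u ≠ v ∧ u ∈ B ∧ v ∈ B ∧ IsCutVertex G u ∧ IsCutVertex G v

/-- A near-leaf block: an internal block `Q` such that either all internal-block
neighbours of `Q` meet `Q` in one common cut-vertex (the anchor), or all block
neighbours of `Q` are leaf blocks. -/
def IsNearLeafBlock {V : Type*} (G : SimpleGraph V) (Q : Set V) : Prop :=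
  IsInternalBlock G Q ∧
    ((∃ a, a ∈ Q ∧ IsCutVertex G a ∧
        ∀ B : Set V, IsInternalBlock G B → B ≠ Q → (B ∩ Q).Nonempty → a ∈ B) ∨
      (∀ B : Set V, IsBlock G B → B ≠ Q → (B ∩ Q).Nonempty → IsLeafBlock G B))

def IsIntervalGraph {V : Type*} (G : SimpleGraph V) : Prop :=
  ∃ a b : V → ℝ, (∀ v, a v ≤ b v) ∧
    ∀ u v : V, u ≠ v →
      (G.Adj u v ↔ (Set.Icc (a u) (b u) ∩ Set.Icc (a v) (b v)).Nonempty)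

def IsCoIntervalGraph {V : Type*} (G : SimpleGraph V) : Prop :=
  IsIntervalGraph Gᶜ

/-- A block graph: every block is a clique. -/
def IsBlockGraph {V : Type*} (G : SimpleGraph V) : Prop :=
  ∀ B : Set V, IsBlock G B → G.IsClique B
/-- The big ant `Q_{u,v}`: the subgraph of `G` with edges `E(Q) ∪ δ_G(u) ∪ δ_G(v)`. -/
def bigAnt {V : Type*} (G : SimpleGraph V) (Q : Set V) (u v : V) : SimpleGraph V where
  Adj a b := G.Adj a b ∧ ((a ∈ Q ∧ b ∈ Q) ∨ a = u ∨ b = u ∨ a = v ∨ b = v)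
  symm := ⟨by
    rintro a b ⟨h1, h2⟩
    exact ⟨h1.symm, by tauto⟩⟩
  loopless := ⟨fun a h => G.irrefl h.1⟩

open scoped Classical

section A
variable {V : Type*}

private lemma exists_inj_Ioo [Fintype V] :
    ∃ c : V → ℝ, Function.Injective c ∧ ∀ x, c x ∈ Set.Ioo (2:ℝ) 3 := by
  classical
  set e := Fintype.equivFin V with he
  set N : ℝ := (Fintype.card V : ℝ) with hN
  have hN0 : (0:ℝ) < N + 1 := by positivity
  refine ⟨fun x => 2 + (((e x : ℕ) : ℝ) + 1) / (N + 1), ?_, ?_⟩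
  · intro x y h
    simp only at h
    have h2 : (((e x : ℕ) : ℝ) + 1) / (N + 1) = (((e y : ℕ) : ℝ) + 1) / (N + 1) := by linarith
    rw [div_eq_div_iff hN0.ne' hN0.ne'] at h2
    have h4 : (e x : ℕ) = (e y : ℕ) := by
      have : ((e x : ℕ) : ℝ) = ((e y : ℕ) : ℝ) := by nlinarith
      exact_mod_cast this
    exact e.injective (Fin.ext h4)
  · intro x
    have hlt : ((e x : ℕ) : ℝ) < N := by
      rw [hN]; exact_mod_cast (e x).2
    constructor
    · have : (0:ℝ) < (((e x : ℕ) : ℝ) + 1) / (N + 1) := by positivity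
      simp only; linarith
    · have : (((e x : ℕ) : ℝ) + 1) / (N + 1) < 1 := by
        rw [div_lt_one hN0]; linarith
      simp only; linarith

private lemma bigAnt_coInterval [Fintype V] (G : SimpleGraph V) (Q : Set V) (u v : V)
    (hQ : G.IsClique Q) (hu : u ∈ Q) (hv : v ∈ Q) :
    IsCoIntervalGraph (bigAnt G Q u v) := by
  classical
  obtain ⟨c, hcinj, hc⟩ := exists_inj_Ioo (V := V)
  set Af : V → ℝ := fun x =>
    if x = u then 0 else if x = v then 4 else if x ∈ Q then c x else
      if G.Adj u x then 3/2 else -10 with hAf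
  set Bf : V → ℝ := fun x =>
    if x = u then 1 else if x = v then 5 else if x ∈ Q then c x else
      if G.Adj v x then 7/2 else 10 with hBf
  have adjQ : ∀ {p q : V}, p ∈ Q → q ∈ Q → p ≠ q → G.Adj p q := fun hp hq h => hQ hp hq h
  have evU : ∀ x, x = u → Af x = 0 ∧ Bf x = 1 := by
    intro x hx; constructor <;> simp [hAf, hBf, hx]
  have evV : ∀ x, x ≠ u → x = v → Af x = 4 ∧ Bf x = 5 := by
    intro x hxu hxv; subst hxv; constructor <;> simp [hAf, hBf, hxu]
  have evQ : ∀ x, x ≠ u → x ≠ v → x ∈ Q → Af x = c x ∧ Bf x = c x := by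
    intro x h1 h2 h3; constructor <;> simp [hAf, hBf, h1, h2, h3]
  have evO : ∀ x, x ≠ u → x ≠ v → x ∉ Q →
      (Af x ≤ 3/2 ∧ 7/2 ≤ Bf x ∧ (1 < Af x ↔ G.Adj u x) ∧ (Bf x < 4 ↔ G.Adj v x)) := by
    intro x h1 h2 h3
    simp only [hAf, hBf, if_neg h1, if_neg h2, if_neg h3]
    by_cases hadju : G.Adj u x <;> by_cases hadjv : G.Adj v x <;>
      simp [hadju, hadjv] <;> norm_num
  have hAB : ∀ x, Af x ≤ Bf x := by
    intro x
    by_cases h1 : x = u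
    · rw [(evU x h1).1, (evU x h1).2]; norm_num
    by_cases h2 : x = v
    · rw [(evV x h1 h2).1, (evV x h1 h2).2]; norm_num
    by_cases h3 : x ∈ Q
    · rw [(evQ x h1 h2 h3).1, (evQ x h1 h2 h3).2]
    · obtain ⟨ha, hb, -, -⟩ := evO x h1 h2 h3; linarith
  refine ⟨Af, Bf, hAB, ?_⟩
  intro x y hxy
  have key : (bigAnt G Q u v).Adj x y ↔ (Bf y < Af x ∨ Bf x < Af y) := by
    show (G.Adj x y ∧ ((x ∈ Q ∧ y ∈ Q) ∨ x = u ∨ y = u ∨ x = v ∨ y = v)) ↔ _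
    by_cases hxu : x = u
    · have hxQ : x ∈ Q := by rw [hxu]; exact hu
      obtain ⟨ha1, hb1⟩ := evU x hxu
      by_cases hyu : y = u
      · exact absurd (hxu.trans hyu.symm) hxy
      by_cases hyv : y = v
      · have hyQ : y ∈ Q := by rw [hyv]; exact hv
        obtain ⟨ha2, hb2⟩ := evV y hyu hyv
        constructor
        · intro _; right; rw [hb1, ha2]; norm_num
        · intro _; exact ⟨adjQ hxQ hyQ hxy, Or.inl ⟨hxQ, hyQ⟩⟩
      by_cases hyQ : y ∈ Q
      · obtain ⟨ha2, hb2⟩ := evQ y hyu hyv hyQ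
        constructor
        · intro _; right; rw [hb1, ha2]; linarith [(hc y).1]
        · intro _; exact ⟨adjQ hxQ hyQ hxy, Or.inl ⟨hxQ, hyQ⟩⟩
      · obtain ⟨ha2, hb2, hiffu, hiffv⟩ := evO y hyu hyv hyQ
        constructor
        · rintro ⟨hadj, -⟩
          have : G.Adj u y := by rw [← hxu]; exact hadj
          right; rw [hb1]; linarith [hiffu.2 this]
        · intro hd
          have h1 : 1 < Af y := by
            rcases hd with hd | hd
            · exfalso; rw [ha1] at hd; linarith
            · rw [hb1] at hd; exact hd
          exact ⟨by rw [hxu]; exact hiffu.1 h1, Or.inr (Or.inl hxu)⟩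
    by_cases hyu : y = u
    · have hyQ : y ∈ Q := by rw [hyu]; exact hu
      obtain ⟨ha2, hb2⟩ := evU y hyu
      by_cases hxv : x = v
      · have hxQ : x ∈ Q := by rw [hxv]; exact hv
        obtain ⟨ha1, hb1⟩ := evV x hxu hxv
        constructor
        · intro _; left; rw [hb2, ha1]; norm_num
        · intro _; exact ⟨adjQ hxQ hyQ hxy, Or.inl ⟨hxQ, hyQ⟩⟩
      by_cases hxQ : x ∈ Q
      · obtain ⟨ha1, hb1⟩ := evQ x hxu hxv hxQ
        constructor
        · intro _; left; rw [hb2, ha1]; linarith [(hc x).1]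
        · intro _; exact ⟨adjQ hxQ hyQ hxy, Or.inl ⟨hxQ, hyQ⟩⟩
      · obtain ⟨ha1, hb1, hiffu, hiffv⟩ := evO x hxu hxv hxQ
        constructor
        · rintro ⟨hadj, -⟩
          have : G.Adj u x := by rw [← hyu]; exact hadj.symm
          left; rw [hb2]; linarith [hiffu.2 this]
        · intro hd
          have h1 : 1 < Af x := by
            rcases hd with hd | hd
            · rw [hb2] at hd; exact hd
            · exfalso; rw [ha2] at hd; linarith
          exact ⟨by rw [hyu]; exact (hiffu.1 h1).symm, Or.inr (Or.inr (Or.inl hyu))⟩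
    by_cases hxv : x = v
    · have hxQ : x ∈ Q := by rw [hxv]; exact hv
      obtain ⟨ha1, hb1⟩ := evV x hxu hxv
      by_cases hyv : y = v
      · exact absurd (hxv.trans hyv.symm) hxy
      by_cases hyQ : y ∈ Q
      · obtain ⟨ha2, hb2⟩ := evQ y hyu hyv hyQ
        constructor
        · intro _; left; rw [ha1, hb2]; linarith [(hc y).2]
        · intro _; exact ⟨adjQ hxQ hyQ hxy, Or.inl ⟨hxQ, hyQ⟩⟩
      · obtain ⟨ha2, hb2, hiffu, hiffv⟩ := evO y hyu hyv hyQ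
        constructor
        · rintro ⟨hadj, -⟩
          have : G.Adj v y := by rw [← hxv]; exact hadj
          left; rw [ha1]; linarith [hiffv.2 this]
        · intro hd
          have h1 : Bf y < 4 := by
            rcases hd with hd | hd
            · rw [ha1] at hd; exact hd
            · exfalso; rw [hb1] at hd; linarith
          exact ⟨by rw [hxv]; exact hiffv.1 h1, Or.inr (Or.inr (Or.inr (Or.inl hxv)))⟩
    by_cases hyv : y = v
    · have hyQ : y ∈ Q := by rw [hyv]; exact hv
      obtain ⟨ha2, hb2⟩ := evV y hyu hyv
      by_cases hxQ : x ∈ Q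
      · obtain ⟨ha1, hb1⟩ := evQ x hxu hxv hxQ
        constructor
        · intro _; right; rw [ha2, hb1]; linarith [(hc x).2]
        · intro _; exact ⟨adjQ hxQ hyQ hxy, Or.inl ⟨hxQ, hyQ⟩⟩
      · obtain ⟨ha1, hb1, hiffu, hiffv⟩ := evO x hxu hxv hxQ
        constructor
        · rintro ⟨hadj, -⟩
          have : G.Adj v x := by rw [← hyv]; exact hadj.symm
          right; rw [ha2]; linarith [hiffv.2 this]
        · intro hd
          have h1 : Bf x < 4 := by
            rcases hd with hd | hd
            · exfalso; rw [hb2] at hd; linarith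
            · rw [ha2] at hd; exact hd
          exact ⟨by rw [hyv]; exact (hiffv.1 h1).symm,
            Or.inr (Or.inr (Or.inr (Or.inr hyv)))⟩
    by_cases hxQ : x ∈ Q
    · by_cases hyQ : y ∈ Q
      · obtain ⟨ha1, hb1⟩ := evQ x hxu hxv hxQ
        obtain ⟨ha2, hb2⟩ := evQ y hyu hyv hyQ
        have hne : c x ≠ c y := fun h => hxy (hcinj h)
        constructor
        · intro _
          rcases hne.lt_or_gt with h | h
          · right; rw [hb1, ha2]; exact h
          · left; rw [hb2, ha1]; exact h
        · intro _; exact ⟨adjQ hxQ hyQ hxy, Or.inl ⟨hxQ, hyQ⟩⟩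
      · obtain ⟨ha1, hb1⟩ := evQ x hxu hxv hxQ
        obtain ⟨ha2, hb2, -, -⟩ := evO y hyu hyv hyQ
        constructor
        · rintro ⟨-, hcond⟩
          exfalso
          rcases hcond with ⟨-, h⟩ | h | h | h | h
          exacts [hyQ h, hxu h, hyu h, hxv h, hyv h]
        · intro hd
          exfalso
          rcases hd with hd | hd
          · rw [ha1] at hd; linarith [(hc x).2]
          · rw [hb1] at hd; linarith [(hc x).1]
    · by_cases hyQ : y ∈ Q
      · obtain ⟨ha2, hb2⟩ := evQ y hyu hyv hyQ
        obtain ⟨ha1, hb1, -, -⟩ := evO x hxu hxv hxQ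
        constructor
        · rintro ⟨-, hcond⟩
          exfalso
          rcases hcond with ⟨h, -⟩ | h | h | h | h
          exacts [hxQ h, hxu h, hyu h, hxv h, hyv h]
        · intro hd
          exfalso
          rcases hd with hd | hd
          · rw [hb2] at hd; linarith [(hc y).1]
          · rw [ha2] at hd; linarith [(hc y).2]
      · obtain ⟨ha1, hb1, -, -⟩ := evO x hxu hxv hxQ
        obtain ⟨ha2, hb2, -, -⟩ := evO y hyu hyv hyQ
        constructor
        · rintro ⟨-, hcond⟩
          exfalso
          rcases hcond with ⟨h, -⟩ | h | h | h | h
          exacts [hxQ h, hxu h, hyu h, hxv h, hyv h]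
        · intro hd
          exfalso
          rcases hd with hd | hd <;> linarith
  rw [SimpleGraph.compl_adj, Set.Icc_inter_Icc, Set.nonempty_Icc]
  constructor
  · rintro ⟨-, hna⟩
    rw [key] at hna; push_neg at hna
    exact sup_le (le_inf (hAB x) hna.1) (le_inf hna.2 (hAB y))
  · intro h
    refine ⟨hxy, ?_⟩
    rw [key]; push_neg
    exact ⟨le_trans (le_trans le_sup_left h) inf_le_right,
      le_trans (le_trans le_sup_right h) inf_le_left⟩
end A

section B
variable {V : Type*}

private lemma exists_block_superset' [Fintype V] (G : SimpleGraph V) (T : Set V)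
    (hT : IsTwoConnectedSet G T) : ∃ Q, IsBlock G Q ∧ T ⊆ Q := by
  classical
  have hfin : {B : Set V | IsTwoConnectedSet G B ∧ T ⊆ B}.Finite := Set.toFinite _
  obtain ⟨Q, ⟨hQ2, hTQ⟩, hQmax⟩ :=
    Set.Finite.exists_maximalFor Set.ncard _ hfin ⟨T, hT, subset_rfl⟩
  refine ⟨Q, ⟨hQ2, fun B' hB' hQB' => ?_⟩, hTQ⟩
  have hmem : B' ∈ {B : Set V | IsTwoConnectedSet G B ∧ T ⊆ B} := ⟨hB', hTQ.trans hQB'⟩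
  have hle : Q.ncard ≤ B'.ncard := Set.ncard_le_ncard hQB' (Set.toFinite _)
  have heq := hQmax hmem hle
  exact Set.eq_of_subset_of_ncard_le hQB' heq (Set.toFinite _)

private lemma isTwoConnectedSet_singleton' (G : SimpleGraph V) (w : V) :
    IsTwoConnectedSet G {w} := by
  refine ⟨⟨w, rfl⟩, ?_, ?_⟩
  · rw [SimpleGraph.connected_iff]
    refine ⟨fun a b => ?_, ⟨⟨w, rfl⟩⟩⟩
    have : a = b := Subtype.ext (a.2.trans b.2.symm)
    rw [this]
  · intro x hx hne
    exfalso
    obtain ⟨z, hz1, hz2⟩ := hne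
    have hx' : x = w := hx
    have hz' : z = w := hz1
    exact hz2 (by rw [hz', hx']; rfl)

private lemma reach_of_adj {G : SimpleGraph V} {S : Set V} {x y : V} (hx : x ∈ S) (hy : y ∈ S)
    (h : G.Adj x y) : (G.induce S).Reachable ⟨x, hx⟩ ⟨y, hy⟩ := SimpleGraph.Adj.reachable h

private lemma le_bigAnt_of_coInterval [Fintype V] [Nonempty V]
    (G H : SimpleGraph V) (hle : H ≤ G) (hco : IsCoIntervalGraph H) :
    ∃ (Q : Set V) (u v : V), IsBlock G Q ∧ u ∈ Q ∧ v ∈ Q ∧ H ≤ bigAnt G Q u v := by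
  classical
  by_cases hedge : ∃ x y, H.Adj x y
  swap
  · -- H has no edges
    obtain ⟨w⟩ := ‹Nonempty V›
    obtain ⟨Q, hQ, hwQ⟩ := exists_block_superset' G {w} (isTwoConnectedSet_singleton' G w)
    refine ⟨Q, w, w, hQ, hwQ rfl, hwQ rfl, fun x y h => absurd ⟨x, y, h⟩ hedge⟩
  obtain ⟨a, b, hab, hiff⟩ := hco
  -- the key characterisation of H-adjacency
  have key : ∀ x y : V, x ≠ y → (H.Adj x y ↔ (b x < a y ∨ b y < a x)) := by
    intro x y hxy
    have h1 := hiff x y hxy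
    rw [SimpleGraph.compl_adj, Set.Icc_inter_Icc, Set.nonempty_Icc] at h1
    constructor
    · intro hadj
      by_contra hcon
      push_neg at hcon
      exact (h1.2 (sup_le (le_inf (hab x) hcon.2) (le_inf hcon.1 (hab y)))).2 hadj
    · intro hd
      by_contra hnadj
      have h2 := h1.1 ⟨hxy, hnadj⟩
      rcases hd with hd | hd
      · have := le_trans (le_trans le_sup_right h2) inf_le_left; linarith
      · have := le_trans (le_trans le_sup_left h2) inf_le_right; linarith
  set N : Set V := {x | ∃ y, H.Adj x y} with hN
  have hNne : N.Nonempty := by obtain ⟨x, y, h⟩ := hedge; exact ⟨x, y, h⟩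
  obtain ⟨u, huN, humin⟩ := Set.exists_min_image N b (Set.toFinite _) hNne
  obtain ⟨v, hvN, hvmax⟩ := Set.exists_max_image N a (Set.toFinite _) hNne
  have memN : ∀ {x y : V}, H.Adj x y → x ∈ N ∧ y ∈ N :=
    fun h => ⟨⟨_, h⟩, ⟨_, h.symm⟩⟩
  have F1 : ∀ {s : V}, H.Adj u s → b u < a s := by
    intro s h
    rcases (key u s h.ne).1 h with h1 | h2
    · exact h1
    · exfalso
      have := humin s (memN h).2
      have := hab u
      linarith
  have F2 : ∀ {s : V}, H.Adj s v → b s < a v := by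
    intro s h
    rcases (key s v h.ne).1 h with h1 | h2
    · exact h1
    · exfalso
      have := hvmax s (memN h).1
      have := hab v
      linarith
  have huv : b u < a v := by
    obtain ⟨t, hvt⟩ := hvN
    have h1 : b t < a v := F2 hvt.symm
    have h2 : b u ≤ b t := humin t (memN hvt.symm).1
    linarith
  have hunv : u ≠ v := by
    intro h
    obtain ⟨s, hus⟩ := huN
    have h1 : b u < a s := F1 hus
    have h2 : a s ≤ a v := hvmax s (memN hus).2
    rw [← h] at h2
    have h3 := hab u
    linarith
  have hAdjuv : H.Adj u v := (key u v hunv).2 (Or.inl huv)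
  set E : Set V := {x | ∃ y, H.Adj x y ∧ x ≠ u ∧ x ≠ v ∧ y ≠ u ∧ y ≠ v} with hE
  have hEu : ∀ x ∈ E, x ≠ u ∧ x ≠ v := fun x ⟨y, h⟩ => ⟨h.2.1, h.2.2.1⟩
  have hEfact : ∀ x ∈ E, ∃ y ∈ E, H.Adj x y ∧
      ((H.Adj x v ∧ H.Adj u y) ∨ (H.Adj u x ∧ H.Adj y v)) := by
    rintro x ⟨y, hxy, hxu, hxv, hyu, hyv⟩
    refine ⟨y, ⟨x, hxy.symm, hyu, hyv, hxu, hxv⟩, hxy, ?_⟩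
    rcases (key x y hxy.ne).1 hxy with h1 | h2
    · left
      constructor
      · refine (key x v hxv).2 (Or.inl ?_)
        have : a y ≤ a v := hvmax y (memN hxy).2
        linarith
      · refine (key u y (Ne.symm hyu)).2 (Or.inl ?_)
        have : b u ≤ b x := humin x (memN hxy).1
        linarith
    · right
      constructor
      · refine (key u x (Ne.symm hxu)).2 (Or.inl ?_)
        have : b u ≤ b y := humin y (memN hxy).2
        linarith
      · refine (key y v hyv).2 (Or.inl ?_)
        have : a x ≤ a v := hvmax x (memN hxy).1
        linarith
  set S : Set V := insert u (insert v E) with hS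
  have huS : u ∈ S := Set.mem_insert _ _
  have hvS : v ∈ S := Set.mem_insert_of_mem _ (Set.mem_insert _ _)
  have hES : E ⊆ S := fun x hx => Set.mem_insert_of_mem _ (Set.mem_insert_of_mem _ hx)
  have hGuv : G.Adj u v := hle hAdjuv
  -- S is two-connected
  have h2conn : IsTwoConnectedSet G S := by
    refine ⟨⟨u, huS⟩, ?_, ?_⟩
    · rw [SimpleGraph.connected_iff]
      refine ⟨?_, ⟨⟨v, hvS⟩⟩⟩
      have hub : ∀ z : S, (G.induce S).Reachable z ⟨v, hvS⟩ := by
        rintro ⟨z, hz⟩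
        rcases hz with rfl | hz
        · exact reach_of_adj huS hvS hGuv
        rcases hz with rfl | hz
        · exact SimpleGraph.Reachable.refl _
        obtain ⟨y, hyE, hadjxy, hcase⟩ := hEfact z hz
        rcases hcase with ⟨h1, h2⟩ | ⟨h1, h2⟩
        · exact reach_of_adj (hES hz) hvS (hle h1)
        · exact (reach_of_adj (hES hz) huS (hle h1.symm)).trans (reach_of_adj huS hvS hGuv)
      exact fun z w => (hub z).trans (hub w).symm
    · intro w hw hne
      rw [SimpleGraph.connected_iff]
      by_cases hwu : w = u
      · have hvS' : v ∈ S \ {w} := ⟨hvS, by simp [hwu, Ne.symm hunv]⟩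
        refine ⟨?_, ⟨⟨v, hvS'⟩⟩⟩
        have hub : ∀ z : ↥(S \ {w}), (G.induce (S \ {w})).Reachable z ⟨v, hvS'⟩ := by
          rintro ⟨z, hz, hzw⟩
          have hzu : z ≠ u := fun h => hzw (Set.mem_singleton_iff.mpr (h.trans hwu.symm))
          rcases hz with rfl | hz
          · exact absurd rfl hzu
          rcases hz with rfl | hz
          · exact SimpleGraph.Reachable.refl _
          have hzS : z ∈ S \ {w} := ⟨hES hz, hzw⟩
          obtain ⟨y, hyE, hadjxy, hcase⟩ := hEfact z hz
          rcases hcase with ⟨h1, h2⟩ | ⟨h1, h2⟩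
          · exact reach_of_adj hzS hvS' (hle h1)
          · have hyS : y ∈ S \ {w} := ⟨hES hyE, by simp [hwu, (hEu y hyE).1]⟩
            exact (reach_of_adj hzS hyS (hle hadjxy)).trans
              (reach_of_adj hyS hvS' (hle h2))
        exact fun z w' => (hub z).trans (hub w').symm
      by_cases hwv : w = v
      · have huS' : u ∈ S \ {w} := ⟨huS, by simp [hwv, hunv]⟩
        refine ⟨?_, ⟨⟨u, huS'⟩⟩⟩
        have hub : ∀ z : ↥(S \ {w}), (G.induce (S \ {w})).Reachable z ⟨u, huS'⟩ := by
          rintro ⟨z, hz, hzw⟩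
          have hzv : z ≠ v := fun h => hzw (Set.mem_singleton_iff.mpr (h.trans hwv.symm))
          rcases hz with rfl | hz
          · exact SimpleGraph.Reachable.refl _
          rcases hz with rfl | hz
          · exact absurd rfl hzv
          have hzS : z ∈ S \ {w} := ⟨hES hz, hzw⟩
          obtain ⟨y, hyE, hadjxy, hcase⟩ := hEfact z hz
          rcases hcase with ⟨h1, h2⟩ | ⟨h1, h2⟩
          · have hyS : y ∈ S \ {w} := ⟨hES hyE, by simp [hwv, (hEu y hyE).2]⟩
            exact (reach_of_adj hzS hyS (hle hadjxy)).trans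
              (reach_of_adj hyS huS' (hle h2.symm))
          · exact reach_of_adj hzS huS' (hle h1.symm)
        exact fun z w' => (hub z).trans (hub w').symm
      · have hvS' : v ∈ S \ {w} := ⟨hvS, by simp [Ne.symm hwv]⟩
        have huS' : u ∈ S \ {w} := ⟨huS, by simp [Ne.symm hwu]⟩
        refine ⟨?_, ⟨⟨v, hvS'⟩⟩⟩
        have hub : ∀ z : ↥(S \ {w}), (G.induce (S \ {w})).Reachable z ⟨v, hvS'⟩ := by
          rintro ⟨z, hz, hzw⟩
          rcases hz with rfl | hz
          · exact reach_of_adj huS' hvS' hGuv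
          rcases hz with rfl | hz
          · exact SimpleGraph.Reachable.refl _
          have hzS : z ∈ S \ {w} := ⟨hES hz, hzw⟩
          obtain ⟨y, hyE, hadjxy, hcase⟩ := hEfact z hz
          rcases hcase with ⟨h1, h2⟩ | ⟨h1, h2⟩
          · exact reach_of_adj hzS hvS' (hle h1)
          · exact (reach_of_adj hzS huS' (hle h1.symm)).trans
              (reach_of_adj huS' hvS' hGuv)
        exact fun z w' => (hub z).trans (hub w').symm
  obtain ⟨Q, hQblock, hSQ⟩ := exists_block_superset' G S h2conn
  refine ⟨Q, u, v, hQblock, hSQ huS, hSQ hvS, ?_⟩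
  intro x y hxy
  refine ⟨hle hxy, ?_⟩
  by_cases hxu : x = u
  · exact Or.inr (Or.inl hxu)
  by_cases hyu : y = u
  · exact Or.inr (Or.inr (Or.inl hyu))
  by_cases hxv : x = v
  · exact Or.inr (Or.inr (Or.inr (Or.inl hxv)))
  by_cases hyv : y = v
  · exact Or.inr (Or.inr (Or.inr (Or.inr hyv)))
  · exact Or.inl ⟨hSQ (hES ⟨y, hxy, hxu, hxv, hyu, hyv⟩),
      hSQ (hES ⟨x, hxy.symm, hyu, hyv, hxu, hxv⟩)⟩
end B

/-- In a block graph, every maximal co-interval subgraph is a big ant `Q_{u,v}`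
for some block `Q` and `u, v ∈ Q`. -/
theorem maximal_coInterval_subgraph_of_blockGraph {V : Type*} [Fintype V] [Nonempty V]
    (G : SimpleGraph V) (hG : IsBlockGraph G) (H : SimpleGraph V)
    (hle : H ≤ G) (hco : IsCoIntervalGraph H)
    (hmax : ∀ H' : SimpleGraph V, H' ≤ G → IsCoIntervalGraph H' → H ≤ H' → H = H') :
    ∃ (Q : Set V) (u v : V), IsBlock G Q ∧ u ∈ Q ∧ v ∈ Q ∧ H = bigAnt G Q u v := by
  classical
  obtain ⟨Q, u, v, hQ, hu, hv, hHle⟩ := le_bigAnt_of_coInterval G H hle hco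
  have hclique : G.IsClique Q := hG Q hQ
  have hAle : bigAnt G Q u v ≤ G := by intro a b h; exact h.1
  exact ⟨Q, u, v, hQ, hu, hv,
    hmax _ hAle (bigAnt_coInterval G Q u v hclique hu hv) hHle⟩
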